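/- arXiv:2204.00122 — 7 statements merged into one kernel-verified Lean document; each statement's English description precedes it below -/
import Mathlib

section
/- Let n ∈ ℕ, and let α, β ∈ ℝⁿ with α_i ≤ β_i for each i. Let φ: ℝⁿ → ℝⁿ act elementwise, φ(v)_i = φ_i(v_i), where each scalar function φ_i: ℝ → ℝ is sector bounded in [α_i, β_i]. Set A = diag(α) and B = diag(β). Then for every diagonal positive semidefinite matrix Λ ∈ ℝ^{n×n}, every v ∈ ℝⁿ, and w = φ(v), it holds that [v; w]ᵀ [[−2ABΛ, (A+B)Λ], [(A+B)Λ, −2Λ]] [v; w] ≥ 0. -/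
/-!
With `A`, `B`, `Λ` diagonal the quadratic form splits over the coordinates, and the `i`-th summand
is `2 λᵢ (wᵢ - αᵢ vᵢ)(βᵢ vᵢ - wᵢ)`: the sector inequality weighted by the diagonal entry
`λᵢ ≥ 0` of the positive semidefinite multiplier.
-/

open Matrix

theorem dotProduct_fromBlocks_diagonal_mulVec {ι R : Type*} [Fintype ι] [DecidableEq ι]
    [CommRing R] (α β l v w : ι → R) :
    Sum.elim v w ⬝ᵥ
      (fromBlocks (-(2 : R) • (diagonal α * diagonal β * diagonal l))
        ((diagonal α + diagonal β) * diagonal l) ((diagonal α + diagonal β) * diagonal l)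
        (-(2 : R) • diagonal l) *ᵥ Sum.elim v w) =
      ∑ i, 2 * l i * ((w i - α i * v i) * (β i * v i - w i)) := by
  rw [diagonal_add]
  simp only [diagonal_mul_diagonal, ← diagonal_smul, fromBlocks_mulVec, mulVec_diagonal,
    Sum.elim_comp_inl, Sum.elim_comp_inr, dotProduct, Fintype.sum_sum_type, Sum.elim_inl,
    Sum.elim_inr, Pi.add_apply, Pi.smul_apply, smul_eq_mul, ← Finset.sum_add_distrib]
  exact Finset.sum_congr rfl fun i _ ↦ by ring

theorem sector_quadratic_constraint_general
    (n : ℕ) (α β : Fin n → ℝ)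
    (φs : Fin n → ℝ → ℝ)
    (hsector : ∀ i, ∀ ν : ℝ, (φs i ν - α i * ν) * (β i * ν - φs i ν) ≥ 0)
    (φ : (Fin n → ℝ) → (Fin n → ℝ)) (hφ : ∀ v i, φ v i = φs i (v i))
    (A B : Matrix (Fin n) (Fin n) ℝ)
    (hA : A = Matrix.diagonal α) (hB : B = Matrix.diagonal β)
    (Λ : Matrix (Fin n) (Fin n) ℝ)
    (hΛdiag : ∀ i j, i ≠ j → Λ i j = 0) (hΛ : Λ.PosSemidef)
    (v w : Fin n → ℝ) (hw : w = φ v) :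
    0 ≤ (Sum.elim v w) ⬝ᵥ
      ((Matrix.fromBlocks (-(2 : ℝ) • (A * B * Λ)) ((A + B) * Λ)
        ((A + B) * Λ) (-(2 : ℝ) • Λ)) *ᵥ (Sum.elim v w)) := by
  have hΛ_eq : diagonal (diag Λ) = Λ := (isDiag_iff_diagonal_diag Λ).mp hΛdiag
  rw [hA, hB, ← hΛ_eq, dotProduct_fromBlocks_diagonal_mulVec]
  refine Finset.sum_nonneg fun i _ ↦ ?_
  have hsector_i : 0 ≤ (w i - α i * v i) * (β i * v i - w i) := by
    simpa only [hw, hφ] using hsector i (v i)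
  have hΛ_ii : 0 ≤ diag Λ i := hΛ.diag_nonneg
  positivity

/-- quadratic constraint satisfied by an elementwise sector bounded
nonlinearity, for any diagonal positive semidefinite multiplier `Λ`. -/
theorem sector_quadratic_constraint
    (n : ℕ) (α β : Fin n → ℝ) (hαβ : ∀ i, α i ≤ β i)
    (φs : Fin n → ℝ → ℝ)
    (hsector : ∀ i, ∀ ν : ℝ, (φs i ν - α i * ν) * (β i * ν - φs i ν) ≥ 0)
    (φ : (Fin n → ℝ) → (Fin n → ℝ)) (hφ : ∀ v i, φ v i = φs i (v i))
    (A B : Matrix (Fin n) (Fin n) ℝ)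
    (hA : A = Matrix.diagonal α) (hB : B = Matrix.diagonal β)
    (Λ : Matrix (Fin n) (Fin n) ℝ)
    (hΛdiag : ∀ i j, i ≠ j → Λ i j = 0) (hΛ : Λ.PosSemidef)
    (v w : Fin n → ℝ) (hw : w = φ v) :
    0 ≤ (Sum.elim v w) ⬝ᵥ
      ((Matrix.fromBlocks (-(2 : ℝ) • (A * B * Λ)) ((A + B) * Λ)
        ((A + B) * Λ) (-(2 : ℝ) • Λ)) *ᵥ (Sum.elim v w)) :=
  sector_quadratic_constraint_general n α β φs hsector φ hφ A B hA hB Λ hΛdiag hΛ v w hw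
end

section
/- Let 𝒜 ∈ ℝ^{n×n}, ℬ ∈ ℝ^{n×m}, 𝒞 ∈ ℝ^{m×n}, 𝒟 ∈ ℝ^{m×m}, let P ∈ ℝ^{n×n} be symmetric positive definite, Λ ∈ ℝ^{m×m} diagonal positive definite, and ρ ∈ [0,1). Suppose the Lyapunov LMI holds: [[𝒜ᵀP𝒜 − ρ²P, 𝒜ᵀPℬ], [ℬᵀP𝒜, ℬᵀPℬ]] + [[𝒞, 𝒟], [0, I]]ᵀ [[Λ, 0], [0, −Λ]] [[𝒞, 𝒟], [0, I]] ≺ 0. Then for all ζ ∈ ℝⁿ and z ∈ ℝ^m such that, with v = 𝒞ζ + 𝒟z, the quadratic constraint vᵀΛv − zᵀΛz ≥ 0 holds, one has (𝒜ζ + ℬz)ᵀP(𝒜ζ + ℬz) ≤ ρ² ζᵀPζ. -/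
/-!
Evaluating the quadratic form of the LMI matrix at the stacked vector `(ζ, z)` gives
`((𝒜ζ + ℬz)ᵀP(𝒜ζ + ℬz) - ρ² ζᵀPζ) + (vᵀΛv - zᵀΛz)` with `v = 𝒞ζ + 𝒟z`. Negative definiteness
makes this sum nonpositive, so a nonnegative second summand forces the first to be nonpositive.
-/

open Matrix

section QuadraticForm

variable {ι κ μ R : Type*}

theorem dotProduct_transpose_mul_mul_mulVec [Fintype ι] [Fintype κ] [CommSemiring R]
    (T : Matrix κ ι R) (S : Matrix κ κ R) (x : ι → R) :
    x ⬝ᵥ ((Tᵀ * S * T) *ᵥ x) = (T *ᵥ x) ⬝ᵥ (S *ᵥ (T *ᵥ x)) := by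
  rw [← mulVec_mulVec, ← mulVec_mulVec, dotProduct_mulVec, vecMul_transpose]

theorem sumElim_dotProduct_fromBlocks_zero_zero_mulVec [Fintype ι] [Fintype κ] [CommSemiring R]
    (A : Matrix ι ι R) (D : Matrix κ κ R) (x : ι → R) (y : κ → R) :
    Sum.elim x y ⬝ᵥ (fromBlocks A 0 0 D *ᵥ Sum.elim x y) = x ⬝ᵥ (A *ᵥ x) + y ⬝ᵥ (D *ᵥ y) := by
  simp [fromBlocks_mulVec, sumElim_dotProduct_sumElim]

theorem fromBlocks_zero_one_mulVec_sumElim [Fintype ι] [Fintype κ] [CommSemiring R]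
    [DecidableEq κ] (C : Matrix μ ι R) (D : Matrix μ κ R) (x : ι → R) (y : κ → R) :
    fromBlocks C D 0 1 *ᵥ Sum.elim x y = Sum.elim (C *ᵥ x + D *ᵥ y) y := by
  simp [fromBlocks_mulVec]

theorem fromBlocks_transpose_mul_mul_sub_smul_eq [Fintype ι] [CommRing R]
    (A : Matrix ι ι R) (B : Matrix ι κ R) (P : Matrix ι ι R) (c : R) :
    fromBlocks (Aᵀ * P * A - c • P) (Aᵀ * P * B) (Bᵀ * P * A) (Bᵀ * P * B) =
      (fromCols A B)ᵀ * P * fromCols A B - c • fromBlocks P 0 0 0 := by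
  rw [transpose_fromCols, fromRows_mul, fromRows_mul_fromCols]
  ext (_ | _) (_ | _) <;> simp

theorem sumElim_dotProduct_lyapunov_mulVec [Fintype ι] [Fintype κ] [CommRing R]
    (A : Matrix ι ι R) (B : Matrix ι κ R) (P : Matrix ι ι R) (c : R) (x : ι → R) (y : κ → R) :
    Sum.elim x y ⬝ᵥ
        (fromBlocks (Aᵀ * P * A - c • P) (Aᵀ * P * B) (Bᵀ * P * A) (Bᵀ * P * B) *ᵥ Sum.elim x y) =
      (A *ᵥ x + B *ᵥ y) ⬝ᵥ (P *ᵥ (A *ᵥ x + B *ᵥ y)) - c * (x ⬝ᵥ (P *ᵥ x)) := by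
  rw [fromBlocks_transpose_mul_mul_sub_smul_eq, sub_mulVec, dotProduct_sub,
    dotProduct_transpose_mul_mul_mulVec, fromCols_mulVec_sumElim, smul_mulVec, dotProduct_smul,
    sumElim_dotProduct_fromBlocks_zero_zero_mulVec]
  simp

theorem sumElim_dotProduct_quadraticConstraint_mulVec [Fintype ι] [Fintype κ] [Fintype μ]
    [CommRing R] [DecidableEq κ] (C : Matrix μ ι R) (D : Matrix μ κ R) (Λ : Matrix μ μ R)
    (Λ' : Matrix κ κ R) (x : ι → R) (y : κ → R) :
    Sum.elim x y ⬝ᵥ (((fromBlocks C D 0 1 : Matrix (μ ⊕ κ) (ι ⊕ κ) R)ᵀ * fromBlocks Λ 0 0 Λ' *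
        (fromBlocks C D 0 1 : Matrix (μ ⊕ κ) (ι ⊕ κ) R)) *ᵥ Sum.elim x y) =
      (C *ᵥ x + D *ᵥ y) ⬝ᵥ (Λ *ᵥ (C *ᵥ x + D *ᵥ y)) + y ⬝ᵥ (Λ' *ᵥ y) := by
  rw [dotProduct_transpose_mul_mul_mulVec, fromBlocks_zero_one_mulVec_sumElim,
    sumElim_dotProduct_fromBlocks_zero_zero_mulVec]

theorem dotProduct_mulVec_nonpos_of_posSemidef_neg [Fintype ι] [CommRing R] [PartialOrder R]
    [IsOrderedRing R] [StarRing R] [TrivialStar R] {M : Matrix ι ι R}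
    (hM : (-M).PosSemidef) (x : ι → R) : x ⬝ᵥ (M *ᵥ x) ≤ 0 := by
  simpa [neg_mulVec] using hM.dotProduct_mulVec_nonneg x

end QuadraticForm

theorem lyapunov_lmi_implies_decrease_general
    (n m : ℕ)
    (𝒜 : Matrix (Fin n) (Fin n) ℝ) (ℬ : Matrix (Fin n) (Fin m) ℝ)
    (𝒞 : Matrix (Fin m) (Fin n) ℝ) (𝒟 : Matrix (Fin m) (Fin m) ℝ)
    (P : Matrix (Fin n) (Fin n) ℝ)
    (Λ : Matrix (Fin m) (Fin m) ℝ)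
    (ρ : ℝ)
    (hLMI : (-(Matrix.fromBlocks (𝒜ᵀ * P * 𝒜 - ρ ^ 2 • P) (𝒜ᵀ * P * ℬ)
        (ℬᵀ * P * 𝒜) (ℬᵀ * P * ℬ) +
      (Matrix.fromBlocks 𝒞 𝒟 0 1 : Matrix (Fin m ⊕ Fin m) (Fin n ⊕ Fin m) ℝ)ᵀ * (Matrix.fromBlocks Λ 0 0 (-Λ)) *
        (Matrix.fromBlocks 𝒞 𝒟 0 1 : Matrix (Fin m ⊕ Fin m) (Fin n ⊕ Fin m) ℝ))).PosDef) :
    ∀ (ζ : Fin n → ℝ) (z : Fin m → ℝ),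
      0 ≤ (𝒞 *ᵥ ζ + 𝒟 *ᵥ z) ⬝ᵥ (Λ *ᵥ (𝒞 *ᵥ ζ + 𝒟 *ᵥ z)) - z ⬝ᵥ (Λ *ᵥ z) →
      (𝒜 *ᵥ ζ + ℬ *ᵥ z) ⬝ᵥ (P *ᵥ (𝒜 *ᵥ ζ + ℬ *ᵥ z)) ≤ ρ ^ 2 * (ζ ⬝ᵥ (P *ᵥ ζ)) := by
  intro ζ z hconstraint
  have hnonpos := dotProduct_mulVec_nonpos_of_posSemidef_neg hLMI.posSemidef (Sum.elim ζ z)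
  rw [add_mulVec, dotProduct_add, sumElim_dotProduct_lyapunov_mulVec,
    sumElim_dotProduct_quadraticConstraint_mulVec, neg_mulVec, dotProduct_neg] at hnonpos
  linarith

/-- the Lyapunov LMI together with the quadratic constraint implies the
Lyapunov function decrease at rate `ρ²`. -/
theorem lyapunov_lmi_implies_decrease
    (n m : ℕ)
    (𝒜 : Matrix (Fin n) (Fin n) ℝ) (ℬ : Matrix (Fin n) (Fin m) ℝ)
    (𝒞 : Matrix (Fin m) (Fin n) ℝ) (𝒟 : Matrix (Fin m) (Fin m) ℝ)
    (P : Matrix (Fin n) (Fin n) ℝ) (hP : P.PosDef)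
    (Λ : Matrix (Fin m) (Fin m) ℝ)
    (hΛdiag : ∀ i j, i ≠ j → Λ i j = 0) (hΛ : Λ.PosDef)
    (ρ : ℝ) (hρ0 : 0 ≤ ρ) (hρ1 : ρ < 1)
    (hLMI : (-(Matrix.fromBlocks (𝒜ᵀ * P * 𝒜 - ρ ^ 2 • P) (𝒜ᵀ * P * ℬ)
        (ℬᵀ * P * 𝒜) (ℬᵀ * P * ℬ) +
      (Matrix.fromBlocks 𝒞 𝒟 0 1 : Matrix (Fin m ⊕ Fin m) (Fin n ⊕ Fin m) ℝ)ᵀ * (Matrix.fromBlocks Λ 0 0 (-Λ)) *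
        (Matrix.fromBlocks 𝒞 𝒟 0 1 : Matrix (Fin m ⊕ Fin m) (Fin n ⊕ Fin m) ℝ))).PosDef) :
    ∀ (ζ : Fin n → ℝ) (z : Fin m → ℝ),
      0 ≤ (𝒞 *ᵥ ζ + 𝒟 *ᵥ z) ⬝ᵥ (Λ *ᵥ (𝒞 *ᵥ ζ + 𝒟 *ᵥ z)) - z ⬝ᵥ (Λ *ᵥ z) →
      (𝒜 *ᵥ ζ + ℬ *ᵥ z) ⬝ᵥ (P *ᵥ (𝒜 *ᵥ ζ + ℬ *ᵥ z)) ≤ ρ ^ 2 * (ζ ⬝ᵥ (P *ᵥ ζ)) :=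
  lyapunov_lmi_implies_decrease_general n m 𝒜 ℬ 𝒞 𝒟 P Λ ρ hLMI
end

section
/- Let 𝒜 ∈ ℝ^{n×n}, ℬ ∈ ℝ^{n×m}, 𝒞 ∈ ℝ^{m×n}, 𝒟 ∈ ℝ^{m×m}, and let φ̃: ℝ^m → ℝ^m act elementwise with each scalar component sector bounded in [−1, 1]. Let sequences ζ: ℕ → ℝⁿ, v, z: ℕ → ℝ^m satisfy ζ(k+1) = 𝒜ζ(k) + ℬz(k), v(k) = 𝒞ζ(k) + 𝒟z(k), and z(k) = φ̃(v(k)) for all k. Suppose there exist a symmetric positive definite P ∈ ℝ^{n×n}, a diagonal positive definite Λ ∈ ℝ^{m×m}, and ρ ∈ [0,1) such that the Lyapunov LMI [[𝒜ᵀP𝒜 − ρ²P, 𝒜ᵀPℬ], [ℬᵀP𝒜, ℬᵀPℬ]] + [[𝒞, 𝒟], [0, I]]ᵀ [[Λ, 0], [0, −Λ]] [[𝒞, 𝒟], [0, I]] ≺ 0 holds. Then for all k ≥ 0, ‖ζ(k)‖ ≤ √(λ_max(P)/λ_min(P)) · ρᵏ · ‖ζ(0)‖, where λ_max(P), λ_min(P)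 are the largest and smallest eigenvalues of P; in particular the origin of the closed-loop system is exponentially stable with rate ρ. -/
/-!
`V(ζ) = ζᵀ P ζ` is a Lyapunov function. Testing the LMI on `(ζ(k), z(k))` gives
`V(ζ(k+1)) - ρ² V(ζ(k)) + (v(k)ᵀ Λ v(k) - z(k)ᵀ Λ z(k)) ≤ 0`, and since `Λ` is diagonal with
positive entries, the sector bound `z(k)ᵢ² ≤ v(k)ᵢ²` makes the bracket nonnegative (S-procedure).
Hence `V(ζ(k)) ≤ ρ^(2k) V(ζ(0))`, and sandwiching `V` between `λ_min(P) ‖ζ‖²` and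
`λ_max(P) ‖ζ‖²` (diagonalize `P` by an orthogonal matrix) gives the bound.
-/

open Matrix

namespace Matrix

variable {ι κ ι' κ' R : Type*} [Fintype ι] [Fintype κ] [Fintype ι'] [Fintype κ']

lemma dotProduct_transpose_mul_mul_mulVec [CommSemiring R] (A : Matrix ι' ι R)
    (P : Matrix ι' κ' R) (B : Matrix κ' κ R) (x : ι → R) (y : κ → R) :
    x ⬝ᵥ ((Aᵀ * P * B) *ᵥ y) = (A *ᵥ x) ⬝ᵥ (P *ᵥ (B *ᵥ y)) := by
  rw [← mulVec_mulVec, ← mulVec_mulVec, dotProduct_mulVec, vecMul_transpose]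

lemma dotProduct_diagonal_mulVec_self [CommSemiring R] [DecidableEq ι] (d x : ι → R) :
    x ⬝ᵥ (diagonal d *ᵥ x) = ∑ i, d i * x i ^ 2 := by
  simp only [dotProduct, mulVec_diagonal]
  exact Finset.sum_congr rfl fun i _ => by ring

lemma IsDiag.dotProduct_mulVec_self_le_of_sq_le [CommRing R] [LinearOrder R]
    [IsStrictOrderedRing R] {Λ : Matrix ι ι R} (hΛ : Λ.IsDiag) (hΛ₀ : ∀ i, 0 ≤ Λ i i)
    {z v : ι → R} (hzv : ∀ i, z i ^ 2 ≤ v i ^ 2) :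
    z ⬝ᵥ (Λ *ᵥ z) ≤ v ⬝ᵥ (Λ *ᵥ v) := by
  classical
  rw [← hΛ.diagonal_diag, dotProduct_diagonal_mulVec_self, dotProduct_diagonal_mulVec_self]
  exact Finset.sum_le_sum fun i _ => mul_le_mul_of_nonneg_left (hzv i) (hΛ₀ i)

section LyapunovLMI

variable [DecidableEq κ]

def lyapunovLMIMatrix [CommRing R] (𝒜 : Matrix ι ι R) (ℬ : Matrix ι κ R)
    (𝒞 : Matrix κ ι R) (𝒟 : Matrix κ κ R) (P : Matrix ι ι R) (Λ : Matrix κ κ R) (ρ : R) :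
    Matrix (ι ⊕ κ) (ι ⊕ κ) R :=
  fromBlocks (𝒜ᵀ * P * 𝒜 - ρ ^ 2 • P) (𝒜ᵀ * P * ℬ) (ℬᵀ * P * 𝒜) (ℬᵀ * P * ℬ) +
    (fromBlocks 𝒞 𝒟 0 (1 : Matrix κ κ R))ᵀ * fromBlocks Λ 0 0 (-Λ) *
      fromBlocks 𝒞 𝒟 0 (1 : Matrix κ κ R)

lemma sumElim_dotProduct_lyapunovLMIMatrix_mulVec [CommRing R] (𝒜 : Matrix ι ι R)
    (ℬ : Matrix ι κ R) (𝒞 : Matrix κ ι R) (𝒟 : Matrix κ κ R) (P : Matrix ι ι R)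
    (Λ : Matrix κ κ R) (ρ : R) (x : ι → R) (w : κ → R) :
    Sum.elim x w ⬝ᵥ (lyapunovLMIMatrix 𝒜 ℬ 𝒞 𝒟 P Λ ρ *ᵥ Sum.elim x w) =
      (𝒜 *ᵥ x + ℬ *ᵥ w) ⬝ᵥ (P *ᵥ (𝒜 *ᵥ x + ℬ *ᵥ w)) - ρ ^ 2 * (x ⬝ᵥ (P *ᵥ x)) +
        ((𝒞 *ᵥ x + 𝒟 *ᵥ w) ⬝ᵥ (Λ *ᵥ (𝒞 *ᵥ x + 𝒟 *ᵥ w)) - w ⬝ᵥ (Λ *ᵥ w)) := by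
  have hG : fromBlocks 𝒞 𝒟 0 (1 : Matrix κ κ R) *ᵥ Sum.elim x w =
      Sum.elim (𝒞 *ᵥ x + 𝒟 *ᵥ w) w := by
    simp [fromBlocks_mulVec]
  rw [lyapunovLMIMatrix, add_mulVec, dotProduct_add, dotProduct_transpose_mul_mul_mulVec, hG,
    fromBlocks_mulVec, fromBlocks_mulVec, sumElim_dotProduct_sumElim, sumElim_dotProduct_sumElim]
  simp only [Sum.elim_comp_inl, Sum.elim_comp_inr, sub_mulVec, dotProduct_add, dotProduct_sub,
    dotProduct_transpose_mul_mul_mulVec, smul_mulVec, dotProduct_smul, smul_eq_mul, zero_mulVec,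
    add_zero, zero_add, neg_mulVec, dotProduct_neg, mulVec_add, add_dotProduct]
  ring

lemma lyapunov_decrease_of_lyapunovLMIMatrix {𝒜 : Matrix ι ι ℝ} {ℬ : Matrix ι κ ℝ}
    {𝒞 : Matrix κ ι ℝ} {𝒟 : Matrix κ κ ℝ} {P : Matrix ι ι ℝ} {Λ : Matrix κ κ ℝ} {ρ : ℝ}
    (hLMI : (-lyapunovLMIMatrix 𝒜 ℬ 𝒞 𝒟 P Λ ρ).PosSemidef) (hΛ : Λ.IsDiag)
    (hΛ₀ : ∀ i, 0 ≤ Λ i i) {x : ι → ℝ} {w : κ → ℝ}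
    (hsector : ∀ i, w i ^ 2 ≤ (𝒞 *ᵥ x + 𝒟 *ᵥ w) i ^ 2) :
    (𝒜 *ᵥ x + ℬ *ᵥ w) ⬝ᵥ (P *ᵥ (𝒜 *ᵥ x + ℬ *ᵥ w)) ≤ ρ ^ 2 * (x ⬝ᵥ (P *ᵥ x)) := by
  have hneg := hLMI.dotProduct_mulVec_nonneg (Sum.elim x w)
  rw [star_trivial, neg_mulVec, dotProduct_neg, sumElim_dotProduct_lyapunovLMIMatrix_mulVec]
    at hneg
  linarith [hΛ.dotProduct_mulVec_self_le_of_sq_le hΛ₀ hsector]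

end LyapunovLMI

variable [DecidableEq ι]

lemma dotProduct_star_mulVec_self_of_mem_unitaryGroup {U : Matrix ι ι ℝ}
    (hU : U ∈ unitaryGroup ι ℝ) (x : ι → ℝ) :
    (star U *ᵥ x) ⬝ᵥ (star U *ᵥ x) = x ⬝ᵥ x := by
  calc (star U *ᵥ x) ⬝ᵥ (star U *ᵥ x) = x ⬝ᵥ (((star U)ᵀ * 1 * star U) *ᵥ x) := by
        rw [dotProduct_transpose_mul_mul_mulVec, one_mulVec]
    _ = x ⬝ᵥ x := by
        rw [star_eq_conjTranspose, conjTranspose_eq_transpose_of_trivial, transpose_transpose,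
          mul_one, ← conjTranspose_eq_transpose_of_trivial, ← star_eq_conjTranspose,
          mem_unitaryGroup_iff.mp hU, one_mulVec]

namespace IsHermitian

variable {A : Matrix ι ι ℝ} (hA : A.IsHermitian)

lemma dotProduct_mulVec_self_eq_sum_eigenvalues (x : ι → ℝ) :
    x ⬝ᵥ (A *ᵥ x) =
      ∑ i, hA.eigenvalues i * ((star (hA.eigenvectorUnitary : Matrix ι ι ℝ) *ᵥ x) i) ^ 2 := by
  set U : Matrix ι ι ℝ := (hA.eigenvectorUnitary : Matrix ι ι ℝ)
  have hA' : A = (star U)ᵀ * diagonal hA.eigenvalues * star U := by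
    conv_lhs => rw [hA.spectral_theorem, Unitary.conjStarAlgAut_apply]
    rw [star_eq_conjTranspose, conjTranspose_eq_transpose_of_trivial, transpose_transpose]
    rfl
  conv_lhs => rw [hA']
  rw [dotProduct_transpose_mul_mul_mulVec, dotProduct_diagonal_mulVec_self]

lemma iInf_eigenvalues_mul_le (x : ι → ℝ) :
    (⨅ i, hA.eigenvalues i) * (x ⬝ᵥ x) ≤ x ⬝ᵥ (A *ᵥ x) := by
  rw [← dotProduct_star_mulVec_self_of_mem_unitaryGroup hA.eigenvectorUnitary.2,
    hA.dotProduct_mulVec_self_eq_sum_eigenvalues, dotProduct, Finset.mul_sum]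
  refine Finset.sum_le_sum fun i _ => ?_
  rw [← sq]
  exact mul_le_mul_of_nonneg_right (ciInf_le (Set.finite_range _).bddBelow i) (sq_nonneg _)

lemma le_iSup_eigenvalues_mul (x : ι → ℝ) :
    x ⬝ᵥ (A *ᵥ x) ≤ (⨆ i, hA.eigenvalues i) * (x ⬝ᵥ x) := by
  rw [← dotProduct_star_mulVec_self_of_mem_unitaryGroup hA.eigenvectorUnitary.2,
    hA.dotProduct_mulVec_self_eq_sum_eigenvalues, dotProduct, Finset.mul_sum]
  refine Finset.sum_le_sum fun i _ => ?_
  rw [← sq]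
  exact mul_le_mul_of_nonneg_right (le_ciSup (Set.finite_range _).bddAbove i) (sq_nonneg _)

end IsHermitian

lemma PosDef.iInf_eigenvalues_pos [Nonempty ι] {A : Matrix ι ι ℝ} (hA : A.PosDef) :
    0 < ⨅ i, hA.1.eigenvalues i := by
  obtain ⟨i, hi⟩ := exists_eq_ciInf_of_finite (f := hA.1.eigenvalues)
  exact hi ▸ hA.eigenvalues_pos i

end Matrix

lemma Real.sqrt_le_sqrt_div_mul_mul_sqrt {a b c s t : ℝ} (ha : 0 < a) (hc : 0 ≤ c) (ht : 0 ≤ t)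
    (h : a * s ≤ c ^ 2 * (b * t)) : √s ≤ √(b / a) * c * √t := by
  have hs : s ≤ b / a * c ^ 2 * t := by
    rw [div_mul_eq_mul_div, div_mul_eq_mul_div, le_div_iff₀ ha]
    linarith
  calc √s ≤ √(b / a * c ^ 2 * t) := Real.sqrt_le_sqrt hs
    _ = √(b / a) * c * √t := by
      rw [Real.sqrt_mul' _ ht, Real.sqrt_mul' _ (sq_nonneg c), Real.sqrt_sq hc]

theorem lyapunov_lmi_implies_exponential_stability_general
    (n m : ℕ)
    (𝒜 : Matrix (Fin n) (Fin n) ℝ) (ℬ : Matrix (Fin n) (Fin m) ℝ)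
    (𝒞 : Matrix (Fin m) (Fin n) ℝ) (𝒟 : Matrix (Fin m) (Fin m) ℝ)
    (φs : Fin m → ℝ → ℝ) (hsector : ∀ i, ∀ ν : ℝ, (φs i ν) ^ 2 ≤ ν ^ 2)
    (φt : (Fin m → ℝ) → (Fin m → ℝ)) (hφt : ∀ v i, φt v i = φs i (v i))
    (ζ : ℕ → Fin n → ℝ) (v z : ℕ → Fin m → ℝ)
    (hdyn : ∀ k, ζ (k + 1) = 𝒜 *ᵥ ζ k + ℬ *ᵥ z k)
    (hout : ∀ k, v k = 𝒞 *ᵥ ζ k + 𝒟 *ᵥ z k)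
    (hnl : ∀ k, z k = φt (v k))
    (P : Matrix (Fin n) (Fin n) ℝ) (hP : P.PosDef)
    (Λ : Matrix (Fin m) (Fin m) ℝ)
    (hΛdiag : ∀ i j, i ≠ j → Λ i j = 0) (hΛ : Λ.PosDef)
    (ρ : ℝ) (hρ0 : 0 ≤ ρ)
    (hLMI : (-(Matrix.fromBlocks (𝒜ᵀ * P * 𝒜 - ρ ^ 2 • P) (𝒜ᵀ * P * ℬ)
        (ℬᵀ * P * 𝒜) (ℬᵀ * P * ℬ) +
      (Matrix.fromBlocks 𝒞 𝒟 0 (1 : Matrix (Fin m) (Fin m) ℝ))ᵀ * (Matrix.fromBlocks Λ 0 0 (-Λ)) *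
        (Matrix.fromBlocks 𝒞 𝒟 0 (1 : Matrix (Fin m) (Fin m) ℝ)))).PosDef) :
    ∀ k : ℕ, Real.sqrt (∑ i, ζ k i ^ 2) ≤
      Real.sqrt ((⨆ i, hP.1.eigenvalues i) / (⨅ i, hP.1.eigenvalues i)) * ρ ^ k *
        Real.sqrt (∑ i, ζ 0 i ^ 2) := by
  intro k
  obtain _ | _ := isEmpty_or_nonempty (Fin n)
  · simp
  set V : (Fin n → ℝ) → ℝ := fun x => x ⬝ᵥ (P *ᵥ x)
  have hdecay : ∀ j, V (ζ (j + 1)) ≤ ρ ^ 2 * V (ζ j) := fun j => by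
    rw [hdyn]
    refine lyapunov_decrease_of_lyapunovLMIMatrix hLMI.posSemidef hΛdiag
      (fun i => hΛ.posSemidef.diag_nonneg) fun i => ?_
    rw [← hout, hnl, hφt]
    exact hsector i _
  have hgeom : V (ζ k) ≤ (ρ ^ 2) ^ k * V (ζ 0) :=
    le_geom (u := fun j => V (ζ j)) (sq_nonneg ρ) k fun j _ => hdecay j
  have hsum_sq : ∀ x : Fin n → ℝ, ∑ i, x i ^ 2 = x ⬝ᵥ x := fun x => by simp only [dotProduct, sq]
  rw [hsum_sq, hsum_sq]
  refine Real.sqrt_le_sqrt_div_mul_mul_sqrt hP.iInf_eigenvalues_pos (pow_nonneg hρ0 k)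
    (Finset.sum_nonneg fun i _ => mul_self_nonneg (ζ 0 i)) ?_
  calc _ ≤ V (ζ k) := hP.1.iInf_eigenvalues_mul_le _
    _ ≤ (ρ ^ 2) ^ k * V (ζ 0) := hgeom
    _ ≤ (ρ ^ k) ^ 2 * ((⨆ i, hP.1.eigenvalues i) * (ζ 0 ⬝ᵥ ζ 0)) := by
      rw [← pow_mul, mul_comm 2, pow_mul]
      gcongr
      exact hP.1.le_iSup_eigenvalues_mul _

/-- the Lyapunov LMI together with the elementwise `[-1, 1]` sector bound
on the nonlinearity implies exponential stability of the origin of the closed loop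
with rate `ρ` and overshoot `√(λ_max(P)/λ_min(P))`. -/
theorem lyapunov_lmi_implies_exponential_stability
    (n m : ℕ)
    (𝒜 : Matrix (Fin n) (Fin n) ℝ) (ℬ : Matrix (Fin n) (Fin m) ℝ)
    (𝒞 : Matrix (Fin m) (Fin n) ℝ) (𝒟 : Matrix (Fin m) (Fin m) ℝ)
    (φs : Fin m → ℝ → ℝ) (hsector : ∀ i, ∀ ν : ℝ, (φs i ν) ^ 2 ≤ ν ^ 2)
    (φt : (Fin m → ℝ) → (Fin m → ℝ)) (hφt : ∀ v i, φt v i = φs i (v i))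
    (ζ : ℕ → Fin n → ℝ) (v z : ℕ → Fin m → ℝ)
    (hdyn : ∀ k, ζ (k + 1) = 𝒜 *ᵥ ζ k + ℬ *ᵥ z k)
    (hout : ∀ k, v k = 𝒞 *ᵥ ζ k + 𝒟 *ᵥ z k)
    (hnl : ∀ k, z k = φt (v k))
    (P : Matrix (Fin n) (Fin n) ℝ) (hP : P.PosDef)
    (Λ : Matrix (Fin m) (Fin m) ℝ)
    (hΛdiag : ∀ i j, i ≠ j → Λ i j = 0) (hΛ : Λ.PosDef)
    (ρ : ℝ) (hρ0 : 0 ≤ ρ) (hρ1 : ρ < 1)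
    (hLMI : (-(Matrix.fromBlocks (𝒜ᵀ * P * 𝒜 - ρ ^ 2 • P) (𝒜ᵀ * P * ℬ)
        (ℬᵀ * P * 𝒜) (ℬᵀ * P * ℬ) +
      (Matrix.fromBlocks 𝒞 𝒟 0 (1 : Matrix (Fin m) (Fin m) ℝ))ᵀ * (Matrix.fromBlocks Λ 0 0 (-Λ)) *
        (Matrix.fromBlocks 𝒞 𝒟 0 (1 : Matrix (Fin m) (Fin m) ℝ)))).PosDef) :
    ∀ k : ℕ, Real.sqrt (∑ i, ζ k i ^ 2) ≤
      Real.sqrt ((⨆ i, hP.1.eigenvalues i) / (⨅ i, hP.1.eigenvalues i)) * ρ ^ k *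
        Real.sqrt (∑ i, ζ 0 i ^ 2) :=
  lyapunov_lmi_implies_exponential_stability_general n m 𝒜 ℬ 𝒞 𝒟 φs hsector φt hφt ζ v z hdyn hout
    hnl P hP Λ hΛdiag hΛ ρ hρ0 hLMI
end

section
/- Let φ̃: ℝ^m → ℝ^m act elementwise, φ̃(v)_i = φ̃_i(v_i), where each φ̃_i: ℝ → ℝ is differentiable with φ̃_i′(x) ∈ [−1, 1] for all x. Let Λ ∈ ℝ^{m×m} be diagonal positive definite and 𝒟 ∈ ℝ^{m×m} satisfy 𝒟ᵀΛ𝒟 ≺ Λ. Then for every c ∈ ℝ^m, the map z ↦ φ̃(𝒟z + c) is a contraction on ℝ^m with respect to the norm ‖x‖_Λ = ‖Λ^{1/2}x‖, and hence there exists a unique z ∈ ℝ^m satisfying z = φ̃(𝒟z + c). -/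
/-!
Since `Λ` is diagonal, `‖·‖_Λ` is monotone in the absolute values of the coordinates, so the
slope bound makes `φ̃` nonexpansive. The condition `𝒟ᵀΛ𝒟 ≺ Λ` says
`‖𝒟w‖_Λ² = wᵀ𝒟ᵀΛ𝒟w < wᵀΛw = ‖w‖_Λ²` for `w ≠ 0`; by compactness of the unit sphere this strict
inequality holds with a uniform factor `γ < 1`. Finally `w ↦ Λ^{1/2} w` is an isometry from
`(ℝ^m, ‖·‖_Λ)` onto Euclidean space, where the Banach fixed point theorem applies.
-/

open Matrix

/-- The weighted norm `‖x‖_Λ = ‖Λ^{1/2} x‖`, where `Λ^{1/2}` is the diagonal matrix of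
square roots of the diagonal entries of `Λ` and `‖·‖` is the Euclidean norm. -/
noncomputable def lamNorm {m : ℕ} (Λ : Matrix (Fin m) (Fin m) ℝ) (x : Fin m → ℝ) : ℝ :=
  Real.sqrt (∑ i, ((Matrix.diagonal fun j => Real.sqrt (Λ j j)) *ᵥ x) i ^ 2)

open scoped NNReal

theorem lipschitzWith_one_of_deriv_mem_Icc {f : ℝ → ℝ} (hf : Differentiable ℝ f)
    (hslope : ∀ x, deriv f x ∈ Set.Icc (-1 : ℝ) 1) : LipschitzWith 1 f :=
  lipschitzWith_of_nnnorm_deriv_le hf fun x => by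
    rw [← NNReal.coe_le_coe, coe_nnnorm, Real.norm_eq_abs, NNReal.coe_one]
    exact abs_le.mpr (hslope x)

theorem ContinuousLinearMap.norm_lt_one_of_norm_apply_lt {E : Type*} [NormedAddCommGroup E]
    [NormedSpace ℝ E] [FiniteDimensional ℝ E] (T : E →L[ℝ] E)
    (hT : ∀ x ≠ 0, ‖T x‖ < ‖x‖) : ‖T‖ < 1 := by
  rcases (Metric.sphere (0 : E) 1).eq_empty_or_nonempty with hempty | hne
  · have : ‖T‖ ≤ 0 := T.opNorm_le_of_unit_norm le_rfl fun x hx => by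
      simp [← mem_sphere_zero_iff_norm, hempty] at hx
    linarith
  obtain ⟨x₀, hx₀, hmax⟩ := (isCompact_sphere (0 : E) 1).exists_isMaxOn hne
    (continuous_norm.comp T.continuous).continuousOn
  have hx₀_norm : ‖x₀‖ = 1 := mem_sphere_zero_iff_norm.1 hx₀
  calc ‖T‖ ≤ ‖T x₀‖ := T.opNorm_le_of_unit_norm (norm_nonneg _) fun x hx =>
          hmax (mem_sphere_zero_iff_norm.2 hx)
    _ < ‖x₀‖ := hT x₀ (ne_zero_of_norm_ne_zero (by simp [hx₀_norm]))
    _ = 1 := hx₀_norm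

theorem Equiv.existsUnique_eq_apply_of_contractingWith {α β : Type*} [MetricSpace β]
    [CompleteSpace β] [Nonempty β] (e : α ≃ β) {f : α → α} {K : ℝ≥0}
    (hf : ContractingWith K (e ∘ f ∘ e.symm)) : ∃! z, z = f z := by
  refine ⟨e.symm (ContractingWith.fixedPoint _ hf), ?_, fun z hz => ?_⟩
  · exact (e.symm_apply_eq.2 hf.fixedPoint_isFixedPt.symm).trans (by simp)
  · refine e.eq_symm_apply.2 (hf.fixedPoint_unique ?_)
    simp [Function.IsFixedPt, ← hz]

section WeightedNorm

variable {m : ℕ} (Λ : Matrix (Fin m) (Fin m) ℝ)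

theorem lamNorm_eq_norm_toLp (x : Fin m → ℝ) :
    lamNorm Λ x = ‖WithLp.toLp 2 fun i => √(Λ i i) * x i‖ := by
  simp [lamNorm, mulVec_diagonal, EuclideanSpace.norm_eq, ← abs_mul]

theorem lamNorm_nonneg (x : Fin m → ℝ) : 0 ≤ lamNorm Λ x :=
  Real.sqrt_nonneg _

variable {Λ}

theorem lamNorm_le_of_abs_le {u v : Fin m → ℝ} (h : ∀ i, |u i| ≤ |v i|) :
    lamNorm Λ u ≤ lamNorm Λ v := by
  simp only [lamNorm, mulVec_diagonal]
  refine Real.sqrt_le_sqrt (Finset.sum_le_sum fun i _ => sq_le_sq.2 ?_)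
  rw [abs_mul, abs_mul]
  exact mul_le_mul_of_nonneg_left (h i) (abs_nonneg _)

theorem lamNorm_sub_le_of_lipschitzWith {φs : Fin m → ℝ → ℝ} (hφs : ∀ i, LipschitzWith 1 (φs i))
    {φt : (Fin m → ℝ) → Fin m → ℝ} (hφt : ∀ v i, φt v i = φs i (v i)) (u v : Fin m → ℝ) :
    lamNorm Λ (φt u - φt v) ≤ lamNorm Λ (u - v) :=
  lamNorm_le_of_abs_le fun i => by
    simpa [hφt, ← Real.dist_eq] using (hφs i).dist_le_mul (u i) (v i)

theorem lamNorm_sq (hΛ : Λ.IsDiag) (hΛ₀ : ∀ i, 0 ≤ Λ i i) (x : Fin m → ℝ) :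
    lamNorm Λ x ^ 2 = x ⬝ᵥ Λ *ᵥ x := by
  rw [lamNorm, Real.sq_sqrt (Finset.sum_nonneg fun i _ => sq_nonneg _), ← hΛ.diagonal_diag]
  simp only [mulVec_diagonal, diag_apply, dotProduct, diagonal_apply_eq]
  refine Finset.sum_congr rfl fun i _ => ?_
  rw [mul_pow, Real.sq_sqrt (hΛ₀ i)]
  ring

theorem lamNorm_mulVec_lt (hΛ : Λ.IsDiag) (hΛ₀ : ∀ i, 0 ≤ Λ i i)
    {𝒟 : Matrix (Fin m) (Fin m) ℝ} (hD : (Λ - 𝒟ᵀ * Λ * 𝒟).PosDef) {w : Fin m → ℝ}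
    (hw : w ≠ 0) : lamNorm Λ (𝒟 *ᵥ w) < lamNorm Λ w := by
  have hpos := hD.dotProduct_mulVec_pos hw
  rw [star_trivial, sub_mulVec, dotProduct_sub, ← lamNorm_sq hΛ hΛ₀, ← mulVec_mulVec,
    ← mulVec_mulVec, dotProduct_mulVec, vecMul_transpose, ← lamNorm_sq hΛ hΛ₀] at hpos
  exact lt_of_pow_lt_pow_left₀ 2 (lamNorm_nonneg Λ w) (by linarith)

variable (hΛ : ∀ i, 0 < Λ i i)
include hΛ

noncomputable def weightedEuclidean : (Fin m → ℝ) ≃ₗ[ℝ] EuclideanSpace ℝ (Fin m) :=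
  LinearEquiv.piCongrRight (fun i => LinearEquiv.smulOfNeZero ℝ ℝ _ (Real.sqrt_pos.2 (hΛ i)).ne')
    ≪≫ₗ (WithLp.linearEquiv 2 ℝ (Fin m → ℝ)).symm

theorem norm_weightedEuclidean (x : Fin m → ℝ) :
    ‖weightedEuclidean hΛ x‖ = lamNorm Λ x := by
  rw [lamNorm_eq_norm_toLp]
  rfl

theorem exists_lamNorm_mulVec_le (hΛdiag : Λ.IsDiag) {𝒟 : Matrix (Fin m) (Fin m) ℝ}
    (hD : (Λ - 𝒟ᵀ * Λ * 𝒟).PosDef) :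
    ∃ γ : ℝ≥0, γ < 1 ∧ ∀ w, lamNorm Λ (𝒟 *ᵥ w) ≤ γ * lamNorm Λ w := by
  set e := weightedEuclidean hΛ
  let T : EuclideanSpace ℝ (Fin m) →L[ℝ] EuclideanSpace ℝ (Fin m) :=
    LinearMap.toContinuousLinearMap (e.conj 𝒟.mulVecLin)
  have hT : ∀ w, T (e w) = e (𝒟 *ᵥ w) := by simp [T, LinearEquiv.conj_apply]
  refine ⟨‖T‖₊, ?_, fun w => ?_⟩
  · suffices ‖T‖ < 1 by exact_mod_cast this
    refine T.norm_lt_one_of_norm_apply_lt fun y hy => ?_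
    obtain ⟨w, rfl⟩ := e.surjective y
    rw [hT, norm_weightedEuclidean, norm_weightedEuclidean]
    exact lamNorm_mulVec_lt hΛdiag (fun i => (hΛ i).le) hD (by rintro rfl; simp at hy)
  · simpa [← norm_weightedEuclidean hΛ, hT] using T.le_opNorm (e w)

theorem existsUnique_eq_of_lamNorm_sub_le {f : (Fin m → ℝ) → Fin m → ℝ} {K : ℝ≥0} (hK : K < 1)
    (hf : ∀ z₁ z₂, lamNorm Λ (f z₁ - f z₂) ≤ K * lamNorm Λ (z₁ - z₂)) : ∃! z, z = f z := by
  set e := weightedEuclidean hΛ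
  refine e.toEquiv.existsUnique_eq_apply_of_contractingWith
    ⟨hK, LipschitzWith.of_dist_le_mul fun x y => ?_⟩
  obtain ⟨a, rfl⟩ := e.surjective x
  obtain ⟨b, rfl⟩ := e.surjective y
  simpa [dist_eq_norm, ← map_sub, e, norm_weightedEuclidean] using hf a b

end WeightedNorm

/-- for an elementwise slope-restricted (in `[-1,1]`) nonlinearity `φ̃`
and `𝒟ᵀΛ𝒟 ≺ Λ`, the map `z ↦ φ̃(𝒟z + c)` is a contraction in `‖·‖_Λ` and has a unique
fixed point. -/
theorem implicit_equation_wellposed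
    (m : ℕ) (φs : Fin m → ℝ → ℝ)
    (hdiff : ∀ i, Differentiable ℝ (φs i))
    (hslope : ∀ i, ∀ x : ℝ, deriv (φs i) x ∈ Set.Icc (-1 : ℝ) 1)
    (φt : (Fin m → ℝ) → (Fin m → ℝ)) (hφt : ∀ v i, φt v i = φs i (v i))
    (Λ : Matrix (Fin m) (Fin m) ℝ)
    (hΛdiag : ∀ i j, i ≠ j → Λ i j = 0) (hΛ : Λ.PosDef)
    (𝒟 : Matrix (Fin m) (Fin m) ℝ) (hD : (Λ - 𝒟ᵀ * Λ * 𝒟).PosDef) :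
    ∀ c : Fin m → ℝ,
      (∃ γ : ℝ, γ < 1 ∧ ∀ z₁ z₂ : Fin m → ℝ,
        lamNorm Λ (φt (𝒟 *ᵥ z₁ + c) - φt (𝒟 *ᵥ z₂ + c)) ≤ γ * lamNorm Λ (z₁ - z₂)) ∧
      (∃! z : Fin m → ℝ, z = φt (𝒟 *ᵥ z + c)) := by
  intro c
  have hΛpos : ∀ i, 0 < Λ i i := fun i => hΛ.diag_pos
  obtain ⟨γ, hγ, h𝒟⟩ := exists_lamNorm_mulVec_le hΛpos (fun i j => hΛdiag i j) hD
  have hφ_nonexp := lamNorm_sub_le_of_lipschitzWith (Λ := Λ)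
    (fun i => lipschitzWith_one_of_deriv_mem_Icc (hdiff i) (hslope i)) hφt
  have hcontr : ∀ z₁ z₂ : Fin m → ℝ,
      lamNorm Λ (φt (𝒟 *ᵥ z₁ + c) - φt (𝒟 *ᵥ z₂ + c)) ≤ γ * lamNorm Λ (z₁ - z₂) :=
    fun z₁ z₂ => calc
      _ ≤ lamNorm Λ (𝒟 *ᵥ z₁ + c - (𝒟 *ᵥ z₂ + c)) := hφ_nonexp _ _
      _ = lamNorm Λ (𝒟 *ᵥ (z₁ - z₂)) := by rw [mulVec_sub, add_sub_add_right_eq_sub]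
      _ ≤ γ * lamNorm Λ (z₁ - z₂) := h𝒟 _
  exact ⟨⟨γ, mod_cast hγ, hcontr⟩, existsUnique_eq_of_lamNorm_sub_le hΛpos hγ hcontr⟩
end

section
/- Let Λ ∈ ℝ^{m×m} be diagonal positive definite and 𝒟 ∈ ℝ^{m×m} satisfy 𝒟ᵀΛ𝒟 ≺ Λ. Then for every diagonal matrix J ∈ ℝ^{m×m} with all diagonal entries in [−1, 1], the matrix I − J𝒟 is invertible. -/
open Matrix

/-!
If `(1 - J𝒟) v = 0` with `v ≠ 0`, then `v = J w` for `w = 𝒟 v`. Positive definiteness of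
`Λ - 𝒟ᵀΛ𝒟` gives `vᵀΛv > wᵀΛw`, whereas a diagonal `J` with entries in `[-1, 1]` can only
shrink the quadratic form of a diagonal `Λ ≥ 0`, so `vᵀΛv = (Jw)ᵀΛ(Jw) ≤ wᵀΛw`.
-/

namespace Matrix

variable {n : Type*} [Fintype n]

theorem dotProduct_sub_transpose_mul_mul_mulVec {R : Type*} [CommRing R]
    (Λ D : Matrix n n R) (v : n → R) :
    v ⬝ᵥ ((Λ - Dᵀ * Λ * D) *ᵥ v) = v ⬝ᵥ (Λ *ᵥ v) - (D *ᵥ v) ⬝ᵥ (Λ *ᵥ (D *ᵥ v)) := by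
  rw [sub_mulVec, dotProduct_sub, ← mulVec_mulVec, ← mulVec_mulVec,
    dotProduct_mulVec v Dᵀ, vecMul_transpose]

theorem dotProduct_diagonal_mulVec_le_of_abs_le_one {R : Type*} [CommRing R] [LinearOrder R]
    [IsStrictOrderedRing R] [DecidableEq n] {l d : n → R} (hl : 0 ≤ l) (hd : ∀ i, |d i| ≤ 1)
    (w : n → R) :
    (diagonal d *ᵥ w) ⬝ᵥ (diagonal l *ᵥ (diagonal d *ᵥ w)) ≤ w ⬝ᵥ (diagonal l *ᵥ w) := by
  simp only [mulVec_diagonal, dotProduct]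
  refine Finset.sum_le_sum fun i _ => ?_
  have hd2 : d i ^ 2 ≤ 1 := by simpa using sq_le_one_iff_abs_le_one (d i) |>.mpr (hd i)
  nlinarith [mul_nonneg (mul_nonneg (sub_nonneg.mpr hd2) (hl i)) (sq_nonneg (w i))]

variable [DecidableEq n]

theorem isUnit_one_sub_mul_of_posDef_sub_transpose_mul_mul {Λ D J : Matrix n n ℝ}
    (hD : (Λ - Dᵀ * Λ * D).PosDef)
    (hJ : ∀ w, (J *ᵥ w) ⬝ᵥ (Λ *ᵥ (J *ᵥ w)) ≤ w ⬝ᵥ (Λ *ᵥ w)) :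
    IsUnit (1 - J * D) := by
  rw [isUnit_iff_isUnit_det, isUnit_iff_ne_zero]
  intro hdet
  obtain ⟨v, hv0, hv⟩ := exists_mulVec_eq_zero_iff.mpr hdet
  have hvJ : v = J *ᵥ (D *ᵥ v) := by
    rwa [sub_mulVec, one_mulVec, ← mulVec_mulVec, sub_eq_zero] at hv
  have hpos := hD.dotProduct_mulVec_pos hv0
  rw [star_trivial, dotProduct_sub_transpose_mul_mul_mulVec] at hpos
  have hle := hJ (D *ᵥ v)
  rw [← hvJ] at hle
  linarith

end Matrix

/-- if `𝒟ᵀΛ𝒟 ≺ Λ` with `Λ` diagonal positive definite, then `I - J𝒟`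
is invertible for every diagonal `J` with entries in `[-1, 1]`. -/
theorem one_sub_JD_invertible
    (m : ℕ) (Λ : Matrix (Fin m) (Fin m) ℝ)
    (hΛdiag : ∀ i j, i ≠ j → Λ i j = 0) (hΛ : Λ.PosDef)
    (𝒟 : Matrix (Fin m) (Fin m) ℝ) (hD : (Λ - 𝒟ᵀ * Λ * 𝒟).PosDef) :
    ∀ d : Fin m → ℝ, (∀ i, d i ∈ Set.Icc (-1 : ℝ) 1) →
      IsUnit (1 - Matrix.diagonal d * 𝒟) := by
  intro d hd
  have hΛdiagonal : Λ = diagonal Λ.diag := (IsDiag.diagonal_diag hΛdiag).symm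
  refine isUnit_one_sub_mul_of_posDef_sub_transpose_mul_mul hD fun w => ?_
  rw [hΛdiagonal]
  exact dotProduct_diagonal_mulVec_le_of_abs_le_one (fun i => hΛ.posSemidef.diag_nonneg)
    (fun i => abs_le.mpr (hd i)) w
end

section
/- Let 𝒜 ∈ ℝ^{n×n}, ℬ ∈ ℝ^{n×m}, 𝒞 ∈ ℝ^{m×n}, 𝒟 ∈ ℝ^{m×m}, P ∈ ℝ^{n×n} symmetric positive definite, Λ ∈ ℝ^{m×m} diagonal positive definite, and ρ ∈ [0,1). Then the Lyapunov LMI [[𝒜ᵀP𝒜 − ρ²P, 𝒜ᵀPℬ], [ℬᵀP𝒜, ℬᵀPℬ]] + [[𝒞, 𝒟], [0, I]]ᵀ [[Λ, 0], [0, −Λ]] [[𝒞, 𝒟], [0, I]] ≺ 0 holds if and only if the 4×4 block matrix [[ρ²P, 0, 𝒜ᵀ, 𝒞ᵀ], [0, Λ, ℬᵀ, 𝒟ᵀ], [𝒜, ℬ, P⁻¹, 0], [𝒞, 𝒟, 0, Λ⁻¹]] is positive definite. -/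
/-!
With `Y = [[𝒜, ℬ], [𝒞, 𝒟]]`, the Lyapunov LMI matrix is `Yᵀ diag(P, Λ) Y - diag(ρ² P, Λ)`, so its
negative is the Schur complement of the block `diag(P⁻¹, Λ⁻¹)` in the 4×4 block matrix. Against a
positive definite lower-right block, a Hermitian block matrix is positive semidefinite exactly when
its Schur complement is, and its determinant is `det D` times that of the complement; so positive
definiteness also passes through the Schur complement.
-/

open Matrix
open scoped ComplexOrder

namespace Matrix

variable {m n 𝕜 : Type*} [Fintype m] [Fintype n] [DecidableEq m] [DecidableEq n] [RCLike 𝕜]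

theorem posDef_iff_posSemidef_and_det_ne_zero {A : Matrix n n 𝕜} :
    A.PosDef ↔ A.PosSemidef ∧ A.det ≠ 0 :=
  ⟨fun h => ⟨h.posSemidef, h.det_pos.ne'⟩, fun h => h.1.posDef_iff_det_ne_zero.2 h.2⟩

theorem posDef_fromBlocks₂₂_iff (A : Matrix m m 𝕜) (B : Matrix n m 𝕜) {D : Matrix n n 𝕜}
    (hD : D.PosDef) : (fromBlocks A Bᴴ B D).PosDef ↔ (A - Bᴴ * D⁻¹ * B).PosDef := by
  let := hD.isUnit.invertible
  obtain ⟨C, rfl⟩ : ∃ C, B = Cᴴ := ⟨Bᴴ, (conjTranspose_conjTranspose B).symm⟩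
  rw [conjTranspose_conjTranspose, posDef_iff_posSemidef_and_det_ne_zero,
    posDef_iff_posSemidef_and_det_ne_zero, PosDef.fromBlocks₂₂ A C hD, det_fromBlocks₂₂,
    invOf_eq_nonsing_inv, mul_ne_zero_iff, and_iff_right hD.det_pos.ne']

theorem PosDef.fromBlocks_zero {A : Matrix m m 𝕜} {D : Matrix n n 𝕜} (hA : A.PosDef)
    (hD : D.PosDef) : (fromBlocks A 0 0 D).PosDef := by
  simpa using (posDef_fromBlocks₂₂_iff A 0 hD).2 (by simpa using hA)

end Matrix

theorem lyapunov_lmi_eq_transpose_mul_mul_sub {m n α : Type*} [Fintype m] [Fintype n]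
    [DecidableEq m] [CommRing α]
    (A : Matrix n n α) (B : Matrix n m α) (C : Matrix m n α) (D : Matrix m m α)
    (P : Matrix n n α) (Λ : Matrix m m α) (r : α) :
    fromBlocks (Aᵀ * P * A - r • P) (Aᵀ * P * B) (Bᵀ * P * A) (Bᵀ * P * B) +
        (fromBlocks C D (0 : Matrix m n α) 1)ᵀ * fromBlocks Λ 0 0 (-Λ) * fromBlocks C D 0 1 =
      (fromBlocks A B C D)ᵀ * fromBlocks P 0 0 Λ * fromBlocks A B C D -
        fromBlocks (r • P) 0 0 Λ := by
  simp only [fromBlocks_transpose, transpose_zero, transpose_one, fromBlocks_multiply]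
  -- The outer product elaborates to the (defeq) `CStarMatrix` multiplication instance.
  erw [fromBlocks_multiply]
  simp only [sub_eq_add_neg, fromBlocks_neg, fromBlocks_add, Matrix.mul_zero, Matrix.zero_mul,
    Matrix.mul_one, Matrix.one_mul, Matrix.mul_neg, neg_zero, add_zero, zero_add, Matrix.mul_assoc]
  congr 1 <;> abel

theorem lyapunov_lmi_iff_schur_block_general
    (n m : ℕ)
    (𝒜 : Matrix (Fin n) (Fin n) ℝ) (ℬ : Matrix (Fin n) (Fin m) ℝ)
    (𝒞 : Matrix (Fin m) (Fin n) ℝ) (𝒟 : Matrix (Fin m) (Fin m) ℝ)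
    (P : Matrix (Fin n) (Fin n) ℝ) (hP : P.PosDef)
    (Λ : Matrix (Fin m) (Fin m) ℝ)
    (hΛ : Λ.PosDef)
    (ρ : ℝ) :
    (-(Matrix.fromBlocks (𝒜ᵀ * P * 𝒜 - ρ ^ 2 • P) (𝒜ᵀ * P * ℬ)
        (ℬᵀ * P * 𝒜) (ℬᵀ * P * ℬ) +
      (Matrix.fromBlocks 𝒞 𝒟 (0 : Matrix (Fin m) (Fin n) ℝ) 1)ᵀ * (Matrix.fromBlocks Λ 0 0 (-Λ)) *
        (Matrix.fromBlocks 𝒞 𝒟 0 1))).PosDef ↔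
    (Matrix.fromBlocks
      (Matrix.fromBlocks (ρ ^ 2 • P) 0 0 Λ) (Matrix.fromBlocks 𝒜ᵀ 𝒞ᵀ ℬᵀ 𝒟ᵀ)
      (Matrix.fromBlocks 𝒜 ℬ 𝒞 𝒟) (Matrix.fromBlocks P⁻¹ 0 0 Λ⁻¹)).PosDef := by
  have hY : fromBlocks 𝒜ᵀ 𝒞ᵀ ℬᵀ 𝒟ᵀ = (fromBlocks 𝒜 ℬ 𝒞 𝒟)ᴴ := by
    rw [conjTranspose_eq_transpose_of_trivial, fromBlocks_transpose]
  have hinv : (fromBlocks P⁻¹ 0 0 Λ⁻¹)⁻¹ = fromBlocks P 0 0 Λ := by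
    rw [inv_fromBlocks_zero₂₁_of_isUnit_iff _ _ _ (iff_of_true hP.inv.isUnit hΛ.inv.isUnit)]
    simp [nonsing_inv_nonsing_inv _ ((isUnit_iff_isUnit_det _).1 hP.isUnit),
      nonsing_inv_nonsing_inv _ ((isUnit_iff_isUnit_det _).1 hΛ.isUnit)]
  rw [lyapunov_lmi_eq_transpose_mul_mul_sub, neg_sub, hY,
    posDef_fromBlocks₂₂_iff _ _ (hP.inv.fromBlocks_zero hΛ.inv), hinv,
    conjTranspose_eq_transpose_of_trivial]

/-- by the Schur complement (using `P ≻ 0`, `Λ ≻ 0`), the Lyapunov LMI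
is equivalent to positive definiteness of a 4×4 block matrix. -/
theorem lyapunov_lmi_iff_schur_block
    (n m : ℕ)
    (𝒜 : Matrix (Fin n) (Fin n) ℝ) (ℬ : Matrix (Fin n) (Fin m) ℝ)
    (𝒞 : Matrix (Fin m) (Fin n) ℝ) (𝒟 : Matrix (Fin m) (Fin m) ℝ)
    (P : Matrix (Fin n) (Fin n) ℝ) (hP : P.PosDef)
    (Λ : Matrix (Fin m) (Fin m) ℝ)
    (hΛdiag : ∀ i j, i ≠ j → Λ i j = 0) (hΛ : Λ.PosDef)
    (ρ : ℝ) (hρ0 : 0 ≤ ρ) (hρ1 : ρ < 1) :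
    (-(Matrix.fromBlocks (𝒜ᵀ * P * 𝒜 - ρ ^ 2 • P) (𝒜ᵀ * P * ℬ)
        (ℬᵀ * P * 𝒜) (ℬᵀ * P * ℬ) +
      (Matrix.fromBlocks 𝒞 𝒟 (0 : Matrix (Fin m) (Fin n) ℝ) 1)ᵀ * (Matrix.fromBlocks Λ 0 0 (-Λ)) *
        (Matrix.fromBlocks 𝒞 𝒟 0 1))).PosDef ↔
    (Matrix.fromBlocks
      (Matrix.fromBlocks (ρ ^ 2 • P) 0 0 Λ) (Matrix.fromBlocks 𝒜ᵀ 𝒞ᵀ ℬᵀ 𝒟ᵀ)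
      (Matrix.fromBlocks 𝒜 ℬ 𝒞 𝒟) (Matrix.fromBlocks P⁻¹ 0 0 Λ⁻¹)).PosDef :=
  lyapunov_lmi_iff_schur_block_general n m 𝒜 ℬ 𝒞 𝒟 P hP Λ hΛ ρ
end

section
/- (Losslessness of the convexification for linear plants.) Let plant matrices A_G ∈ ℝ^{n×n}, B_G ∈ ℝ^{n×n_u}, C_G ∈ ℝ^{n_y×n} and a rate ρ ∈ [0,1) be given, and set the controller state dimension n_ξ = n. Suppose there exist symmetric matrices X, Y ∈ ℝ^{n×n}, a diagonal positive definite Λ ∈ ℝ^{n_φ×n_φ}, and matrices N₁₁ ∈ ℝ^{n×n}, N₁₂ ∈ ℝ^{n×n_y}, N₂₁ ∈ ℝ^{n_u×n}, N₂₂ ∈ ℝ^{n_u×n_y}, N̂₁₂ ∈ ℝ^{n×n_φ}, N̂₂₁ ∈ ℝ^{n_φ×n}, D̃_{K1} ∈ ℝ^{n_u×n_φ}, D̂_{K3} ∈ ℝ^{n_φ×n_φ}, D̂_{K4} ∈ ℝ^{n_φ×n_y} such that, with T₁ = [[Y, I], [I, X]], T₂ = [[A_G Y + B_G N₂₁, A_G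 + B_G N₂₂ C_G], [N₁₁, X A_G + N₁₂ C_G]], T₃ = [[B_G D̃_{K1}], [N̂₁₂]], T₄ = [N̂₂₁, D̂_{K4} C_G], the 4×4 block matrix [[ρ² T₁, 0, T₂ᵀ, T₄ᵀ], [0, Λ, T₃ᵀ, D̂_{K3}ᵀ], [T₂, T₃, T₁, 0], [T₄, D̂_{K3}, 0, Λ]] is positive definite. Assume further that U = X and V = X⁻¹ − Y are invertible. Define 𝒴 = [[Y, I], [Vᵀ, 0]], P = (𝒴ᵀ)⁻¹ T₁ 𝒴⁻¹, and recover controller matrices by [[Ã_K, B̃_{K2}], [C̃_{K1}, D̃_{K2}]] = [[U, X B_G], [0, I]]⁻¹ ([[N₁₁, N₁₂], [N₂₁, N₂₂]] − [[X A_G Y, 0], [0, 0]]) [[Vᵀ, 0], [C_G Y, I]]⁻¹, B̃_{K1} = U⁻¹(N̂₁₂ − X B_G D̃_{K1}), C̃_{K2} = Λ⁻¹(N̂₂₁ − D̂_{K4} C_G Y)(Vᵀ)⁻¹, D̃_{K3} = Λ⁻¹ D̂_{K3}, D̃_{K4} = Λ⁻¹ D̂_{K4}. Then P is symmetric positive definite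 and, with the closed-loop matrices 𝒜 = [[A_G + B_G D̃_{K2} C_G, B_G C̃_{K1}], [B̃_{K2} C_G, Ã_K]], ℬ = [[B_G D̃_{K1}], [B̃_{K1}]], 𝒞 = [D̃_{K4} C_G, C̃_{K2}], 𝒟 = D̃_{K3}, the Lyapunov LMI [[𝒜ᵀP𝒜 − ρ²P, 𝒜ᵀPℬ], [ℬᵀP𝒜, ℬᵀPℬ]] + [[𝒞, 𝒟], [0, I]]ᵀ [[Λ, 0], [0, −Λ]] [[𝒞, 𝒟], [0, I]] ≺ 0 holds with this P and Λ. -/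
/-!
Put `𝒵 = [[I, X], [0, X]]`. Since `V X = I - Y X`, one has `𝒴ᵀ 𝒵 = T₁`, hence `P 𝒴 = 𝒵`, and the
controller recovery is exactly the inverse of the change of variables, so that
`𝒵ᵀ 𝒜 𝒴 = T₂`, `𝒵ᵀ ℬ = T₃`, `Λ 𝒞 𝒴 = T₄` and `Λ 𝒟 = D̂_{K3}`. With `ℛ = [[𝒜, ℬ], [𝒞, 𝒟]]` and
`Q = diag(P, Λ)`, the convex LMI is therefore the congruence transform by `diag(𝒴, I, 𝒴, I)` of
`[[diag(ρ² P, Λ), ℛᵀ Q], [Q ℛ, Q]]`, whose Schur complement with respect to `Q ≻ 0` is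
`diag(ρ² P, Λ) - ℛᵀ Q ℛ`, the negated Lyapunov LMI. Finally `P ≻ 0` because `P` is congruent to
the diagonal block `T₁` of the convex LMI.
-/

open Matrix

namespace Matrix

variable {l m n : Type*}

theorem PosDef.toBlocks₂₂ {R : Type*} [Ring R] [PartialOrder R] [StarRing R]
    {M : Matrix (m ⊕ n) (m ⊕ n) R} (hM : M.PosDef) : M.toBlocks₂₂.PosDef :=
  hM.submatrix Sum.inr_injective

open scoped ComplexOrder in
theorem PosDef.fromBlocks₂₂_iff {𝕜 : Type*} [RCLike 𝕜] [Fintype m] [Fintype n]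
    [DecidableEq n] {A : Matrix m m 𝕜} {B : Matrix m n 𝕜} {D : Matrix n n 𝕜} (hD : D.PosDef) :
    (fromBlocks A B Bᴴ D).PosDef ↔ (A - B * D⁻¹ * Bᴴ).PosDef := by
  classical
  have := hD.isUnit.invertible
  have hunit : IsUnit (fromBlocks A B Bᴴ D) ↔ IsUnit (A - B * D⁻¹ * Bᴴ) := by
    rw [isUnit_fromBlocks_iff_of_invertible₂₂, invOf_eq_nonsing_inv]
  constructor
  · intro h
    exact ((PosDef.fromBlocks₂₂ A B hD).mp h.posSemidef).posDef_iff_isUnit.mpr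
      (hunit.mp h.isUnit)
  · intro h
    exact ((PosDef.fromBlocks₂₂ A B hD).mpr h.posSemidef).posDef_iff_isUnit.mpr
      (hunit.mpr h.isUnit)

open scoped ComplexOrder in
theorem PosDef.fromBlocks_zero_iff {𝕜 : Type*} [RCLike 𝕜] [Fintype m] [Fintype n]
    [DecidableEq n] {A : Matrix m m 𝕜} {D : Matrix n n 𝕜} (hD : D.PosDef) :
    (fromBlocks A 0 0 D).PosDef ↔ A.PosDef := by
  simpa using PosDef.fromBlocks₂₂_iff (A := A) (B := 0) hD

theorem IsUnit.posDef_transpose_conjugate_iff {R : Type*} [CommRing R] [PartialOrder R]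
    [StarRing R] [TrivialStar R] [Fintype n] [DecidableEq n] {U x : Matrix n n R}
    (hU : IsUnit U) : (Uᵀ * x * U).PosDef ↔ x.PosDef := by
  rw [← conjTranspose_eq_transpose_of_trivial]
  exact hU.posDef_star_left_conjugate_iff

theorem fromBlocks_diagonal_transpose_mul_mul {α : Type*} [CommSemiring α] [Fintype l]
    [Fintype m] (W₁ : Matrix l l α) (W₂ : Matrix m m α) (A : Matrix l l α) (B : Matrix l m α)
    (C : Matrix m l α) (D : Matrix m m α) :
    (fromBlocks W₁ 0 0 W₂)ᵀ * fromBlocks A B C D * fromBlocks W₁ 0 0 W₂ =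
      fromBlocks (W₁ᵀ * A * W₁) (W₁ᵀ * B * W₂) (W₂ᵀ * C * W₁) (W₂ᵀ * D * W₂) := by
  simp [fromBlocks_transpose, fromBlocks_multiply]

theorem isUnit_fromBlocks_one_zero {α : Type*} [CommRing α] [Fintype n] [DecidableEq n]
    (A : Matrix n n α) {C : Matrix n n α} (hC : IsUnit C) :
    IsUnit (fromBlocks A (1 : Matrix n n α) C 0) := by
  refine IsUnit.of_mul_eq_one (fromBlocks 0 C⁻¹ 1 (-(A * C⁻¹))) ?_
  simp [fromBlocks_multiply, ← fromBlocks_one,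
    mul_nonsing_inv _ ((isUnit_iff_isUnit_det C).mp hC)]

end Matrix

section Lyapunov

variable {ι κ : Type*} [Fintype ι] [Fintype κ] [DecidableEq κ]

theorem neg_lyapunovLMI_eq {α : Type*} [CommRing α] (ρ : α) (P 𝒜 : Matrix ι ι α)
    (ℬ : Matrix ι κ α) (𝒞 : Matrix κ ι α) (𝒟 Λ : Matrix κ κ α) :
    -(fromBlocks (𝒜ᵀ * P * 𝒜 - ρ ^ 2 • P) (𝒜ᵀ * P * ℬ) (ℬᵀ * P * 𝒜) (ℬᵀ * P * ℬ) +
      (fromBlocks 𝒞 𝒟 (0 : Matrix κ ι α) 1)ᵀ * fromBlocks Λ 0 0 (-Λ) *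
        fromBlocks 𝒞 𝒟 (0 : Matrix κ ι α) 1) =
    fromBlocks (ρ ^ 2 • P) 0 0 Λ -
      (fromBlocks 𝒜 ℬ 𝒞 𝒟)ᵀ * fromBlocks P 0 0 Λ * fromBlocks 𝒜 ℬ 𝒞 𝒟 := by
  simp only [fromBlocks_transpose, fromBlocks_multiply, fromBlocks_neg, fromBlocks_add,
    sub_eq_add_neg, fromBlocks_inj, transpose_zero, transpose_one]
  refine ⟨?_, ?_, ?_, ?_⟩ <;>
    simp only [Matrix.mul_zero, Matrix.zero_mul, Matrix.mul_one, add_zero, zero_add,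
      Matrix.one_mul, Matrix.mul_neg, neg_add_rev, neg_neg, neg_zero, Matrix.mul_assoc] <;> abel

theorem lyapunovSchurMatrix_congruence {α : Type*} [CommRing α] {ρ : α}
    {P 𝒴 𝒜 T₁ T₂ : Matrix ι ι α} {ℬ T₃ : Matrix ι κ α} {𝒞 T₄ : Matrix κ ι α}
    {𝒟 Λ T₅ : Matrix κ κ α} (hP : Pᵀ = P) (hΛ : Λᵀ = Λ)
    (h₁ : 𝒴ᵀ * P * 𝒴 = T₁) (h₂ : (P * 𝒴)ᵀ * 𝒜 * 𝒴 = T₂) (h₃ : (P * 𝒴)ᵀ * ℬ = T₃)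
    (h₄ : Λ * 𝒞 * 𝒴 = T₄) (h₅ : Λ * 𝒟 = T₅) :
    (fromBlocks (fromBlocks 𝒴 0 0 (1 : Matrix κ κ α)) 0 0
        (fromBlocks 𝒴 0 0 (1 : Matrix κ κ α)))ᵀ *
      fromBlocks (fromBlocks (ρ ^ 2 • P) 0 0 Λ)
        ((fromBlocks 𝒜 ℬ 𝒞 𝒟)ᵀ * fromBlocks P 0 0 Λ)
        ((fromBlocks 𝒜 ℬ 𝒞 𝒟)ᵀ * fromBlocks P 0 0 Λ)ᵀ (fromBlocks P 0 0 Λ) *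
      fromBlocks (fromBlocks 𝒴 0 0 (1 : Matrix κ κ α)) 0 0
        (fromBlocks 𝒴 0 0 (1 : Matrix κ κ α)) =
    fromBlocks (fromBlocks (ρ ^ 2 • T₁) 0 0 Λ) (fromBlocks T₂ᵀ T₄ᵀ T₃ᵀ T₅ᵀ)
      (fromBlocks T₂ T₃ T₄ T₅) (fromBlocks T₁ 0 0 Λ) := by
  set W : Matrix (ι ⊕ κ) (ι ⊕ κ) α := fromBlocks 𝒴 0 0 1 with hW
  have hlower : Wᵀ * ((fromBlocks 𝒜 ℬ 𝒞 𝒟)ᵀ * fromBlocks P 0 0 Λ)ᵀ * W =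
      fromBlocks T₂ T₃ T₄ T₅ := by
    have hQ : (fromBlocks P 0 0 Λ)ᵀ = fromBlocks P 0 0 Λ := by
      simp [fromBlocks_transpose, hP, hΛ]
    rw [transpose_mul, transpose_transpose, hQ, fromBlocks_multiply, hW,
      fromBlocks_diagonal_transpose_mul_mul, ← h₂, ← h₃, ← h₄, ← h₅, transpose_mul, hP]
    simp [Matrix.mul_assoc]
  have hupper : Wᵀ * ((fromBlocks 𝒜 ℬ 𝒞 𝒟)ᵀ * fromBlocks P 0 0 Λ) * W =
      fromBlocks T₂ᵀ T₄ᵀ T₃ᵀ T₅ᵀ := by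
    rw [← fromBlocks_transpose, ← hlower]
    simp [transpose_mul, Matrix.mul_assoc]
  have hdiag (S : Matrix ι ι α) :
      Wᵀ * fromBlocks S 0 0 Λ * W = fromBlocks (𝒴ᵀ * S * 𝒴) 0 0 Λ := by
    simp [hW, fromBlocks_diagonal_transpose_mul_mul]
  rw [fromBlocks_diagonal_transpose_mul_mul, hdiag, hdiag, hupper, hlower, Matrix.mul_smul,
    Matrix.smul_mul, h₁]

variable [DecidableEq ι]

theorem posDef_neg_lyapunovLMI_of_congruence {ρ : ℝ} {P 𝒴 𝒜 T₁ T₂ : Matrix ι ι ℝ}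
    {ℬ T₃ : Matrix ι κ ℝ} {𝒞 T₄ : Matrix κ ι ℝ} {𝒟 Λ T₅ : Matrix κ κ ℝ}
    (hP : P.PosDef) (hΛ : Λ.PosDef) (h𝒴 : IsUnit 𝒴)
    (h₁ : 𝒴ᵀ * P * 𝒴 = T₁) (h₂ : (P * 𝒴)ᵀ * 𝒜 * 𝒴 = T₂) (h₃ : (P * 𝒴)ᵀ * ℬ = T₃)
    (h₄ : Λ * 𝒞 * 𝒴 = T₄) (h₅ : Λ * 𝒟 = T₅)
    (h : (fromBlocks (fromBlocks (ρ ^ 2 • T₁) 0 0 Λ) (fromBlocks T₂ᵀ T₄ᵀ T₃ᵀ T₅ᵀ)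
      (fromBlocks T₂ T₃ T₄ T₅) (fromBlocks T₁ 0 0 Λ)).PosDef) :
    (-(fromBlocks (𝒜ᵀ * P * 𝒜 - ρ ^ 2 • P) (𝒜ᵀ * P * ℬ) (ℬᵀ * P * 𝒜) (ℬᵀ * P * ℬ) +
      (fromBlocks 𝒞 𝒟 (0 : Matrix κ ι ℝ) 1)ᵀ * fromBlocks Λ 0 0 (-Λ) *
        fromBlocks 𝒞 𝒟 (0 : Matrix κ ι ℝ) 1)).PosDef := by
  set R := fromBlocks 𝒜 ℬ 𝒞 𝒟
  set Q := fromBlocks P 0 0 Λ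
  have hQ : Q.PosDef := (PosDef.fromBlocks_zero_iff hΛ).mpr hP
  have hQt : Qᵀ = Q := isHermitian_iff_isSymm.mp hQ.isHermitian
  have hW : IsUnit (fromBlocks (fromBlocks 𝒴 0 0 (1 : Matrix κ κ ℝ)) 0 0
      (fromBlocks 𝒴 0 0 (1 : Matrix κ κ ℝ))) := by
    simp [isUnit_fromBlocks_zero₂₁, h𝒴]
  rw [← lyapunovSchurMatrix_congruence (isHermitian_iff_isSymm.mp hP.isHermitian)
    (isHermitian_iff_isSymm.mp hΛ.isHermitian) h₁ h₂ h₃ h₄ h₅,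
    hW.posDef_transpose_conjugate_iff] at h
  have hS := (PosDef.fromBlocks₂₂_iff (A := fromBlocks (ρ ^ 2 • P) 0 0 Λ) (B := Rᵀ * Q) hQ).mp
    (by simpa only [conjTranspose_eq_transpose_of_trivial] using h)
  have hRQR : Rᵀ * Q * Q⁻¹ * (Rᵀ * Q)ᴴ = Rᵀ * Q * R := by
    have := hQ.isUnit.invertible
    rw [conjTranspose_eq_transpose_of_trivial, transpose_mul, transpose_transpose, hQt,
      Matrix.mul_assoc, Matrix.mul_assoc, Matrix.inv_mul_cancel_left_of_invertible,
      Matrix.mul_assoc]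
  rw [neg_lyapunovLMI_eq]
  exact hRQR ▸ hS

end Lyapunov

section Plant

variable {α : Type*} [CommRing α] {n m p q : Type*} [Fintype n] [DecidableEq n]

theorem transpose_fromBlocks_mul_fromBlocks_of_inv_sub {X Y V : Matrix n n α} (hX : IsUnit X)
    (hY : Yᵀ = Y) (hV : V = X⁻¹ - Y) :
    (fromBlocks Y 1 Vᵀ 0)ᵀ * fromBlocks 1 X 0 X = fromBlocks Y 1 1 X := by
  have hVX : V * X = 1 - Y * X := by
    rw [hV, Matrix.sub_mul, nonsing_inv_mul X ((isUnit_iff_isUnit_det X).mp hX)]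
  simp [fromBlocks_transpose, fromBlocks_multiply, hY, hVX]

theorem changeOfVariables_stateMatrix {AG X Y V AK N11 : Matrix n n α} {BG : Matrix n m α}
    {CG : Matrix p n α} {BK2 N12 : Matrix n p α} {CK1 N21 : Matrix m n α}
    {DK2 N22 : Matrix m p α} [Fintype m] [Fintype p] [DecidableEq m] [DecidableEq p]
    (hX : IsUnit X) (hV : IsUnit V)
    (hK : fromBlocks AK BK2 CK1 DK2 = (fromBlocks X (X * BG) 0 1)⁻¹ *
      (fromBlocks N11 N12 N21 N22 - fromBlocks (X * AG * Y) 0 0 0) *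
      (fromBlocks Vᵀ 0 (CG * Y) 1)⁻¹) :
    fromBlocks 1 0 X X * fromBlocks (AG + BG * DK2 * CG) (BG * CK1) (BK2 * CG) AK *
      fromBlocks Y 1 Vᵀ 0 =
    fromBlocks (AG * Y + BG * N21) (AG + BG * N22 * CG) N11 (X * AG + N12 * CG) := by
  have hF : IsUnit (fromBlocks X (X * BG) 0 (1 : Matrix m m α)).det :=
    (isUnit_iff_isUnit_det _).mp (isUnit_fromBlocks_zero₂₁.mpr ⟨hX, isUnit_one⟩)
  have hG : IsUnit (fromBlocks Vᵀ 0 (CG * Y) (1 : Matrix p p α)).det :=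
    (isUnit_iff_isUnit_det _).mp
      (isUnit_fromBlocks_zero₁₂.mpr ⟨(isUnit_transpose V).mpr hV, isUnit_one⟩)
  have hN : fromBlocks N11 N12 N21 N22 = fromBlocks (X * AG * Y) 0 0 0 +
      fromBlocks X (X * BG) 0 1 * fromBlocks AK BK2 CK1 DK2 * fromBlocks Vᵀ 0 (CG * Y) 1 := by
    refine eq_add_of_sub_eq' ?_
    rw [hK]
    simp only [Matrix.mul_assoc]
    rw [nonsing_inv_mul _ hG, Matrix.mul_one, mul_nonsing_inv_cancel_left _ _ hF]
  simp only [fromBlocks_multiply, fromBlocks_add, fromBlocks_inj] at hN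
  obtain ⟨rfl, rfl, rfl, rfl⟩ := hN
  simp only [fromBlocks_multiply, fromBlocks_inj, Matrix.zero_mul, Matrix.one_mul,
    Matrix.mul_zero, Matrix.mul_one, zero_add, add_zero]
  refine ⟨?_, ?_, ?_, ?_⟩ <;>
    simp only [Matrix.mul_add, Matrix.add_mul, Matrix.mul_assoc] <;> abel

theorem changeOfVariables_inputMatrix {X : Matrix n n α} {BG : Matrix n m α}
    {DK1 : Matrix m q α} {Nhat12 : Matrix n q α} [Fintype m] (hX : IsUnit X) :
    fromBlocks 1 0 X X * fromRows (BG * DK1) (X⁻¹ * (Nhat12 - X * BG * DK1)) =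
      fromRows (BG * DK1) Nhat12 := by
  simp [fromBlocks_mul_fromRows, Matrix.mul_assoc,
    mul_nonsing_inv_cancel_left _ _ ((isUnit_iff_isUnit_det X).mp hX)]

theorem changeOfVariables_outputMatrix {Y V : Matrix n n α} {CG : Matrix p n α}
    {Λ : Matrix q q α} {Nhat21 : Matrix q n α} {DK4hat : Matrix q p α} [Fintype p] [Fintype q]
    [DecidableEq q] (hΛ : IsUnit Λ) (hV : IsUnit V) :
    Λ * fromCols (Λ⁻¹ * DK4hat * CG) (Λ⁻¹ * (Nhat21 - DK4hat * CG * Y) * Vᵀ⁻¹) *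
      fromBlocks Y 1 Vᵀ 0 = fromCols Nhat21 (DK4hat * CG) := by
  simp [mul_fromCols, fromCols_mul_fromBlocks, Matrix.mul_assoc,
    mul_nonsing_inv_cancel_left _ _ ((isUnit_iff_isUnit_det Λ).mp hΛ),
    nonsing_inv_mul _ ((isUnit_iff_isUnit_det _).mp ((isUnit_transpose V).mpr hV))]

end Plant

theorem convexification_lossless_linear_plant_general
    (n nu ny nφ : ℕ)
    (AG : Matrix (Fin n) (Fin n) ℝ) (BG : Matrix (Fin n) (Fin nu) ℝ)
    (CG : Matrix (Fin ny) (Fin n) ℝ)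
    (ρ : ℝ)
    (X Y : Matrix (Fin n) (Fin n) ℝ) (hXsymm : X.IsSymm) (hYsymm : Y.IsSymm)
    (Λ : Matrix (Fin nφ) (Fin nφ) ℝ) (hΛ : Λ.PosDef)
    (N11 : Matrix (Fin n) (Fin n) ℝ) (N12 : Matrix (Fin n) (Fin ny) ℝ)
    (N21 : Matrix (Fin nu) (Fin n) ℝ) (N22 : Matrix (Fin nu) (Fin ny) ℝ)
    (Nhat12 : Matrix (Fin n) (Fin nφ) ℝ) (Nhat21 : Matrix (Fin nφ) (Fin n) ℝ)
    (DK1t : Matrix (Fin nu) (Fin nφ) ℝ)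
    (DK3hat : Matrix (Fin nφ) (Fin nφ) ℝ) (DK4hat : Matrix (Fin nφ) (Fin ny) ℝ)
    (T1 T2 : Matrix (Fin n ⊕ Fin n) (Fin n ⊕ Fin n) ℝ)
    (T3 : Matrix (Fin n ⊕ Fin n) (Fin nφ) ℝ) (T4 : Matrix (Fin nφ) (Fin n ⊕ Fin n) ℝ)
    (hT1 : T1 = Matrix.fromBlocks Y 1 1 X)
    (hT2 : T2 = Matrix.fromBlocks (AG * Y + BG * N21) (AG + BG * N22 * CG)
      N11 (X * AG + N12 * CG))
    (hT3 : T3 = Matrix.fromRows (BG * DK1t) Nhat12)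
    (hT4 : T4 = Matrix.fromCols Nhat21 (DK4hat * CG))
    (hBig : (Matrix.fromBlocks
      (Matrix.fromBlocks (ρ ^ 2 • T1) 0 0 Λ) (Matrix.fromBlocks T2ᵀ T4ᵀ T3ᵀ DK3hatᵀ)
      (Matrix.fromBlocks T2 T3 T4 DK3hat) (Matrix.fromBlocks T1 0 0 Λ)).PosDef)
    (U V : Matrix (Fin n) (Fin n) ℝ) (hUdef : U = X) (hVdef : V = X⁻¹ - Y)
    (hU : IsUnit U) (hV : IsUnit V)
    (𝒴 P : Matrix (Fin n ⊕ Fin n) (Fin n ⊕ Fin n) ℝ)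
    (h𝒴 : 𝒴 = Matrix.fromBlocks Y 1 Vᵀ 0)
    (hPdef : P = (𝒴ᵀ)⁻¹ * T1 * 𝒴⁻¹)
    (AKt : Matrix (Fin n) (Fin n) ℝ) (BK2t : Matrix (Fin n) (Fin ny) ℝ)
    (CK1t : Matrix (Fin nu) (Fin n) ℝ) (DK2t : Matrix (Fin nu) (Fin ny) ℝ)
    (BK1t : Matrix (Fin n) (Fin nφ) ℝ) (CK2t : Matrix (Fin nφ) (Fin n) ℝ)
    (DK3t : Matrix (Fin nφ) (Fin nφ) ℝ) (DK4t : Matrix (Fin nφ) (Fin ny) ℝ)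
    (hK : Matrix.fromBlocks AKt BK2t CK1t DK2t =
      (Matrix.fromBlocks U (X * BG) 0 1)⁻¹ *
        (Matrix.fromBlocks N11 N12 N21 N22 - Matrix.fromBlocks (X * AG * Y) 0 0 0) *
        (Matrix.fromBlocks Vᵀ 0 (CG * Y) 1)⁻¹)
    (hBK1t : BK1t = U⁻¹ * (Nhat12 - X * BG * DK1t))
    (hCK2t : CK2t = Λ⁻¹ * (Nhat21 - DK4hat * CG * Y) * (Vᵀ)⁻¹)
    (hDK3t : DK3t = Λ⁻¹ * DK3hat)
    (hDK4t : DK4t = Λ⁻¹ * DK4hat)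
    (𝒜 : Matrix (Fin n ⊕ Fin n) (Fin n ⊕ Fin n) ℝ)
    (h𝒜 : 𝒜 = Matrix.fromBlocks (AG + BG * DK2t * CG) (BG * CK1t) (BK2t * CG) AKt)
    (ℬ : Matrix (Fin n ⊕ Fin n) (Fin nφ) ℝ)
    (hℬ : ℬ = Matrix.fromRows (BG * DK1t) BK1t)
    (𝒞 : Matrix (Fin nφ) (Fin n ⊕ Fin n) ℝ)
    (h𝒞 : 𝒞 = Matrix.fromCols (DK4t * CG) CK2t)
    (𝒟 : Matrix (Fin nφ) (Fin nφ) ℝ) (h𝒟 : 𝒟 = DK3t) :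
    P.PosDef ∧
    (-(Matrix.fromBlocks (𝒜ᵀ * P * 𝒜 - ρ ^ 2 • P) (𝒜ᵀ * P * ℬ)
        (ℬᵀ * P * 𝒜) (ℬᵀ * P * ℬ) +
      (Matrix.fromBlocks 𝒞 𝒟 (0 : Matrix (Fin nφ) (Fin n ⊕ Fin n) ℝ) 1)ᵀ * (Matrix.fromBlocks Λ 0 0 (-Λ)) *
        (Matrix.fromBlocks 𝒞 𝒟 (0 : Matrix (Fin nφ) (Fin n ⊕ Fin n) ℝ) 1))).PosDef := by
  subst hT1 hT2 hT3 hT4 h𝒴 h𝒜 hℬ h𝒞 h𝒟 hBK1t hCK2t hDK3t hDK4t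
  subst U
  have h𝒴 : IsUnit (fromBlocks Y 1 Vᵀ 0) :=
    isUnit_fromBlocks_one_zero Y ((isUnit_transpose V).mpr hV)
  have hT1 : (fromBlocks Y 1 1 X).PosDef :=
    (PosDef.fromBlocks_zero_iff hΛ).mp (by simpa using hBig.toBlocks₂₂)
  have h𝒴𝒵 := transpose_fromBlocks_mul_fromBlocks_of_inv_sub hU hYsymm hVdef
  have hPY : P * fromBlocks Y 1 Vᵀ 0 = fromBlocks 1 X 0 X := by
    have h𝒴det := (isUnit_iff_isUnit_det _).mp h𝒴
    rw [hPdef, ← h𝒴𝒵, nonsing_inv_mul_cancel_right _ _ h𝒴det,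
      nonsing_inv_mul_cancel_left _ _ (by rwa [det_transpose])]
  have hP : P.PosDef := by
    rw [hPdef, ← transpose_nonsing_inv]
    exact (isUnit_nonsing_inv_iff.mpr h𝒴).posDef_transpose_conjugate_iff.mpr hT1
  have hPYt : (P * fromBlocks Y 1 Vᵀ 0)ᵀ = fromBlocks 1 0 X X := by
    simp [hPY, fromBlocks_transpose, hXsymm.eq]
  refine ⟨hP, posDef_neg_lyapunovLMI_of_congruence hP hΛ h𝒴 ?_ ?_ ?_ ?_ ?_ hBig⟩
  · rw [Matrix.mul_assoc, hPY, h𝒴𝒵]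
  · rw [hPYt]
    exact changeOfVariables_stateMatrix hU hV hK
  · rw [hPYt]
    exact changeOfVariables_inputMatrix hU
  · exact changeOfVariables_outputMatrix hΛ.isUnit hV
  · exact mul_nonsing_inv_cancel_left _ _ ((isUnit_iff_isUnit_det Λ).mp hΛ.isUnit)

/-- losslessness of the convexification for linear plants. Feasibility of
the convex condition `LMI(θ̂)` yields, through the recovery of the controller parameters
`θ̃`, a Lyapunov certificate `(P, Λ)` for the closed-loop Lyapunov LMI. -/
theorem convexification_lossless_linear_plant
    (n nu ny nφ : ℕ)
    (AG : Matrix (Fin n) (Fin n) ℝ) (BG : Matrix (Fin n) (Fin nu) ℝ)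
    (CG : Matrix (Fin ny) (Fin n) ℝ)
    (ρ : ℝ) (hρ0 : 0 ≤ ρ) (hρ1 : ρ < 1)
    (X Y : Matrix (Fin n) (Fin n) ℝ) (hXsymm : X.IsSymm) (hYsymm : Y.IsSymm)
    (Λ : Matrix (Fin nφ) (Fin nφ) ℝ)
    (hΛdiag : ∀ i j, i ≠ j → Λ i j = 0) (hΛ : Λ.PosDef)
    (N11 : Matrix (Fin n) (Fin n) ℝ) (N12 : Matrix (Fin n) (Fin ny) ℝ)
    (N21 : Matrix (Fin nu) (Fin n) ℝ) (N22 : Matrix (Fin nu) (Fin ny) ℝ)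
    (Nhat12 : Matrix (Fin n) (Fin nφ) ℝ) (Nhat21 : Matrix (Fin nφ) (Fin n) ℝ)
    (DK1t : Matrix (Fin nu) (Fin nφ) ℝ)
    (DK3hat : Matrix (Fin nφ) (Fin nφ) ℝ) (DK4hat : Matrix (Fin nφ) (Fin ny) ℝ)
    (T1 T2 : Matrix (Fin n ⊕ Fin n) (Fin n ⊕ Fin n) ℝ)
    (T3 : Matrix (Fin n ⊕ Fin n) (Fin nφ) ℝ) (T4 : Matrix (Fin nφ) (Fin n ⊕ Fin n) ℝ)
    (hT1 : T1 = Matrix.fromBlocks Y 1 1 X)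
    (hT2 : T2 = Matrix.fromBlocks (AG * Y + BG * N21) (AG + BG * N22 * CG)
      N11 (X * AG + N12 * CG))
    (hT3 : T3 = Matrix.fromRows (BG * DK1t) Nhat12)
    (hT4 : T4 = Matrix.fromCols Nhat21 (DK4hat * CG))
    (hBig : (Matrix.fromBlocks
      (Matrix.fromBlocks (ρ ^ 2 • T1) 0 0 Λ) (Matrix.fromBlocks T2ᵀ T4ᵀ T3ᵀ DK3hatᵀ)
      (Matrix.fromBlocks T2 T3 T4 DK3hat) (Matrix.fromBlocks T1 0 0 Λ)).PosDef)
    (U V : Matrix (Fin n) (Fin n) ℝ) (hUdef : U = X) (hVdef : V = X⁻¹ - Y)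
    (hU : IsUnit U) (hV : IsUnit V)
    (𝒴 P : Matrix (Fin n ⊕ Fin n) (Fin n ⊕ Fin n) ℝ)
    (h𝒴 : 𝒴 = Matrix.fromBlocks Y 1 Vᵀ 0)
    (hPdef : P = (𝒴ᵀ)⁻¹ * T1 * 𝒴⁻¹)
    (AKt : Matrix (Fin n) (Fin n) ℝ) (BK2t : Matrix (Fin n) (Fin ny) ℝ)
    (CK1t : Matrix (Fin nu) (Fin n) ℝ) (DK2t : Matrix (Fin nu) (Fin ny) ℝ)
    (BK1t : Matrix (Fin n) (Fin nφ) ℝ) (CK2t : Matrix (Fin nφ) (Fin n) ℝ)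
    (DK3t : Matrix (Fin nφ) (Fin nφ) ℝ) (DK4t : Matrix (Fin nφ) (Fin ny) ℝ)
    (hK : Matrix.fromBlocks AKt BK2t CK1t DK2t =
      (Matrix.fromBlocks U (X * BG) 0 1)⁻¹ *
        (Matrix.fromBlocks N11 N12 N21 N22 - Matrix.fromBlocks (X * AG * Y) 0 0 0) *
        (Matrix.fromBlocks Vᵀ 0 (CG * Y) 1)⁻¹)
    (hBK1t : BK1t = U⁻¹ * (Nhat12 - X * BG * DK1t))
    (hCK2t : CK2t = Λ⁻¹ * (Nhat21 - DK4hat * CG * Y) * (Vᵀ)⁻¹)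
    (hDK3t : DK3t = Λ⁻¹ * DK3hat)
    (hDK4t : DK4t = Λ⁻¹ * DK4hat)
    (𝒜 : Matrix (Fin n ⊕ Fin n) (Fin n ⊕ Fin n) ℝ)
    (h𝒜 : 𝒜 = Matrix.fromBlocks (AG + BG * DK2t * CG) (BG * CK1t) (BK2t * CG) AKt)
    (ℬ : Matrix (Fin n ⊕ Fin n) (Fin nφ) ℝ)
    (hℬ : ℬ = Matrix.fromRows (BG * DK1t) BK1t)
    (𝒞 : Matrix (Fin nφ) (Fin n ⊕ Fin n) ℝ)
    (h𝒞 : 𝒞 = Matrix.fromCols (DK4t * CG) CK2t)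
    (𝒟 : Matrix (Fin nφ) (Fin nφ) ℝ) (h𝒟 : 𝒟 = DK3t) :
    P.PosDef ∧
    (-(Matrix.fromBlocks (𝒜ᵀ * P * 𝒜 - ρ ^ 2 • P) (𝒜ᵀ * P * ℬ)
        (ℬᵀ * P * 𝒜) (ℬᵀ * P * ℬ) +
      (Matrix.fromBlocks 𝒞 𝒟 (0 : Matrix (Fin nφ) (Fin n ⊕ Fin n) ℝ) 1)ᵀ * (Matrix.fromBlocks Λ 0 0 (-Λ)) *
        (Matrix.fromBlocks 𝒞 𝒟 (0 : Matrix (Fin nφ) (Fin n ⊕ Fin n) ℝ) 1))).PosDef :=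
  convexification_lossless_linear_plant_general n nu ny nφ AG BG CG ρ X Y hXsymm hYsymm Λ hΛ N11 N12
    N21 N22 Nhat12 Nhat21 DK1t DK3hat DK4hat T1 T2 T3 T4 hT1 hT2 hT3 hT4 hBig U V hUdef hVdef hU hV
    𝒴 P h𝒴 hPdef AKt BK2t CK1t DK2t BK1t CK2t DK3t DK4t hK hBK1t hCK2t hDK3t hDK4t 𝒜 h𝒜 ℬ hℬ 𝒞 h𝒞 𝒟
    h𝒟
end
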